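/- arXiv:1906.02574 — 2 statements merged into one kernel-verified Lean document; each statement's English description precedes it below -/
import Mathlib

section
/- Let S_1, S_2, … be a sequence where S_i is an ε_i-nearly k-distance set in ℝ^{d'} with distances 1 ≤ t_1^i < … < t_k^i and ε_i → 0. Suppose there is K with t_{j+1}^i / t_j^i ≤ K for all i, j, and suppose for some fixed r (1 ≤ r ≤ k−1) we have t_{r+1}^i / t_r^i → 1 as i → ∞. Then limsup_{i→∞} |S_i| ≤ m_{k−1}(d'). -/
open scoped BigOperators RealInnerProductSpace
open Filter

noncomputable section

abbrev Pt (d : ℕ) := EuclideanSpace ℝ (Fin d)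

def Separated {d : ℕ} (S : Finset (Pt d)) : Prop :=
  ∀ p ∈ S, ∀ q ∈ S, p ≠ q → 1 ≤ dist p q

def IsKDistSet {d : ℕ} (k : ℕ) (S : Finset (Pt d)) : Prop :=
  ∃ D : Finset ℝ, D.card ≤ k ∧ ∀ p ∈ S, ∀ q ∈ S, p ≠ q → dist p q ∈ D

def mDist (k d : ℕ) : ℕ :=
  sSup {n : ℕ | ∃ S : Finset (Pt d), S.card = n ∧ IsKDistSet k S}

def IsNearlyKDist {d : ℕ} (k : ℕ) (ε : ℝ) (S : Finset (Pt d)) : Prop :=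
  Separated S ∧ ∃ t : ℕ → ℝ, (∀ i < k, 1 ≤ t i) ∧
    ∀ p ∈ S, ∀ q ∈ S, p ≠ q → ∃ i < k, dist p q ∈ Set.Icc (t i) (t i + ε)

def Mnear (k d : ℕ) : ℕ :=
  sSup {M : ℕ | ∀ ε : ℝ, 0 < ε → ∃ S : Finset (Pt d), S.card = M ∧ IsNearlyKDist k ε S}

def vsAngle {d : ℕ} (v : Pt d) (Λ : Submodule ℝ (Pt d)) : ℝ :=
  sInf {θ : ℝ | ∃ w ∈ Λ, w ≠ 0 ∧ θ = InnerProductGeometry.angle v w}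

def IsFlatAt {d : ℕ} (S : Finset (Pt d)) (p : Pt d) (j : ℕ) (α : ℝ) : Prop :=
  ∃ Λ : Submodule ℝ (Pt d), Module.finrank ℝ Λ = j ∧
    ∀ q ∈ S, q ≠ p → vsAngle (p - q) Λ ≤ α

def Nflat (k d' d : ℕ) : ℕ :=
  sSup {N : ℕ | ∀ ε α : ℝ, 0 < ε → 0 < α →
    ∃ S : Finset (Pt d'), S.card = N ∧ IsNearlyKDist k ε S ∧ ∀ p ∈ S, IsFlatAt S p d α}

def turanNum (n s : ℕ) : ℕ :=
  n.choose 2 - ((n % s) * (n / s + 1).choose 2 + (s - n % s) * (n / s).choose 2)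

open Classical in
def nearPairs {d : ℕ} (S : Finset (Pt d)) (k : ℕ) (ε : ℝ) (t : ℕ → ℝ) :
    Finset (Pt d × Pt d) :=
  S.offDiag.filter (fun pq => ∃ i < k, dist pq.1 pq.2 ∈ Set.Icc (t i) (t i + ε))

def Mkdn (k d n : ℕ) : ℕ :=
  sSup {M : ℕ | ∃ (S : Finset (Pt d)) (t : ℕ → ℝ), S.card = n ∧ Separated S ∧
    (∀ i < k, 1 ≤ t i) ∧ (nearPairs S k 1 t).card = 2 * M}

/-!
Rescale `S_i` by its smallest scale `t_0^i`. The ratio bound keeps the rescaled scales in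
`[1, K^(k-1)]`, and the rescaled sets (after a translation) in a fixed ball, so along a subsequence
the rescaled configurations and scales converge. In the limit every distance equals one of the
limiting scales; these are at least `1`, so the limit points stay distinct, and the `r`-th and
`(r+1)`-st of them coincide, so the limit is a `(k-1)`-distance set of the same size.

The supremum `m_{k-1}(d)` is finite, hence bounds every `(k-1)`-distance set, by the polynomial
method: for a `k`-distance set `S` with distance set `D`, the functions
`x ↦ ∏_{c ∈ D} (1 - |x - p|² / c²)`, `p ∈ S`, are linearly independent and lie in the span of
products of `k` of the `d + 2` functions `|x|²`, `1`, `x_i`.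
-/

open Filter Topology Finset
open scoped Pointwise

open Classical in
def sphereGenerators (d : ℕ) : Finset (Pt d → ℝ) :=
  insert (fun x => ‖x‖ ^ 2) (insert 1 (univ.image fun i x => x i))

lemma card_sphereGenerators_le (d : ℕ) : (sphereGenerators d).card ≤ d + 2 := by
  classical
  unfold sphereGenerators
  refine (card_insert_le _ _).trans (Nat.succ_le_succ ((card_insert_le _ _).trans ?_))
  exact Nat.succ_le_succ (card_image_le.trans (by simp))

lemma const_sub_mul_dist_sq_mem_span_sphereGenerators {d : ℕ} (p : Pt d) (a b : ℝ) :
    (fun x => a - b * dist x p ^ 2) ∈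
      Submodule.span ℝ (sphereGenerators d : Set (Pt d → ℝ)) := by
  have hexpand : (fun x : Pt d => a - b * dist x p ^ 2) =
      (-b) • (fun x : Pt d => ‖x‖ ^ 2) + ∑ i, (2 * b * p i) • (fun x : Pt d => x i) +
        (a - b * ‖p‖ ^ 2) • (1 : Pt d → ℝ) := by
    funext x
    have hinner : ⟪x, p⟫ = ∑ i, x i * p i := by simp [PiLp.inner_apply, mul_comm]
    have hsum : ∑ i, 2 * b * p i * x i = 2 * b * ⟪x, p⟫ := by
      rw [hinner, Finset.mul_sum]
      exact sum_congr rfl fun i _ => by ring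
    simp only [Pi.add_apply, Pi.smul_apply, Finset.sum_apply, smul_eq_mul, Pi.one_apply, hsum,
      dist_eq_norm, norm_sub_sq_real]
    ring
  rw [hexpand]
  refine add_mem (add_mem ?_ (sum_mem fun i _ => ?_)) ?_ <;>
    exact Submodule.smul_mem _ _ (Submodule.subset_span (by simp [sphereGenerators]))

theorem Submodule.prod_mem_pow_card {R A ι : Type*} [CommSemiring R] [CommSemiring A]
    [Algebra R A] (M : Submodule R A) {s : Finset ι} {f : ι → A} (hf : ∀ i ∈ s, f i ∈ M) :
    ∏ i ∈ s, f i ∈ M ^ s.card := by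
  classical
  induction s using Finset.induction_on with
  | empty => simpa using Submodule.one_le.1 (le_refl (1 : Submodule R A))
  | insert a s ha ih =>
    rw [prod_insert ha, card_insert_of_notMem ha, pow_succ']
    exact Submodule.mul_mem_mul (hf a (mem_insert_self a s))
      (ih fun i hi => hf i (mem_insert_of_mem hi))

def distAnnihilator {d : ℕ} (D : Finset ℝ) (p : Pt d) : Pt d → ℝ :=
  ∏ c ∈ D, fun x => 1 - (c ^ 2)⁻¹ * dist x p ^ 2

lemma distAnnihilator_self {d : ℕ} (D : Finset ℝ) (p : Pt d) : distAnnihilator D p p = 1 := by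
  simp [distAnnihilator, Finset.prod_apply]

lemma distAnnihilator_eq_zero {d : ℕ} {D : Finset ℝ} {p x : Pt d} (hx : x ≠ p)
    (hD : dist x p ∈ D) : distAnnihilator D p x = 0 := by
  rw [distAnnihilator, Finset.prod_apply]
  exact prod_eq_zero hD (by simp [dist_ne_zero.2 hx])

lemma distAnnihilator_mem_span_pow {d : ℕ} (D : Finset ℝ) (p : Pt d) :
    distAnnihilator D p ∈ Submodule.span ℝ (sphereGenerators d : Set (Pt d → ℝ)) ^ D.card := by
  unfold distAnnihilator
  exact Submodule.prod_mem_pow_card _ fun c _ =>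
    const_sub_mul_dist_sq_mem_span_sphereGenerators p 1 (c ^ 2)⁻¹

theorem IsKDistSet.card_le_pow {d k : ℕ} {S : Finset (Pt d)} (h : IsKDistSet k S) :
    S.card ≤ (d + 2) ^ k := by
  classical
  obtain ⟨D, hDk, hD⟩ := h
  let V := Submodule.span ℝ ((sphereGenerators d ^ D.card : Finset _) : Set (Pt d → ℝ))
  have hV (p : Pt d) : distAnnihilator D p ∈ V := by
    simp only [V, Finset.coe_pow, ← Submodule.span_pow]
    exact distAnnihilator_mem_span_pow D p
  have hG : LinearIndependent ℝ fun p : S => distAnnihilator D (p : Pt d) := by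
    refine .of_pairwise_dual_eq_zero_one _ (fun p => LinearMap.proj (p : Pt d))
      (fun p q hpq => ?_) fun p => ?_
    all_goals simp only [LinearMap.proj_apply]
    · have hpq' : (p : Pt d) ≠ q := Subtype.coe_ne_coe.2 hpq
      exact distAnnihilator_eq_zero hpq' (hD p p.2 q q.2 hpq')
    · exact distAnnihilator_self _ _
  calc S.card = Fintype.card S := (Fintype.card_coe S).symm
    _ ≤ Module.finrank ℝ V := (LinearIndependent.of_comp V.subtype
        (v := fun p => ⟨_, hV p⟩) hG).fintype_card_le_finrank
    _ ≤ (sphereGenerators d ^ D.card).card := finrank_span_finset_le_card _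
    _ ≤ (sphereGenerators d).card ^ D.card := card_pow_le
    _ ≤ (d + 2) ^ D.card := Nat.pow_le_pow_left (card_sphereGenerators_le d) _
    _ ≤ (d + 2) ^ k := Nat.pow_le_pow_right (by omega) hDk

theorem IsKDistSet.card_le_mDist {d k : ℕ} {S : Finset (Pt d)} (h : IsKDistSet k S) :
    S.card ≤ mDist k d :=
  le_csSup ⟨(d + 2) ^ k, by rintro _ ⟨T, rfl, hT⟩; exact hT.card_le_pow⟩ ⟨S, rfl, h⟩

theorem card_le_mDist_of_dist_mem_range {ι : Type*} [Fintype ι] {d k : ℕ} (x : ι → Pt d)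
    (L : Fin k → ℝ) (hL : ∀ j, 0 < L j) (hLinj : ¬ Function.Injective L)
    (hx : ∀ a b, a ≠ b → dist (x a) (x b) ∈ Set.range L) :
    Fintype.card ι ≤ mDist (k - 1) d := by
  classical
  have hxinj : Function.Injective x := fun a b hab => by
    by_contra hne
    obtain ⟨j, hj⟩ := hx a b hne
    simpa [hab] using (hL j).trans_eq hj
  have hD : (univ.image L).card < k := by
    refine (card_image_le.trans_eq (card_fin k)).lt_of_ne fun hcard => hLinj fun a b hab => ?_
    exact card_image_iff.1 (hcard.trans (card_fin k).symm) (by simp) (by simp) hab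
  have hS : IsKDistSet (k - 1) (univ.image x) := by
    refine ⟨univ.image L, by omega, ?_⟩
    rintro _ hp _ hq hpq
    obtain ⟨a, -, rfl⟩ := mem_image.1 hp
    obtain ⟨b, -, rfl⟩ := mem_image.1 hq
    obtain ⟨j, hj⟩ := hx a b fun h => hpq (h ▸ rfl)
    exact mem_image.2 ⟨j, mem_univ j, hj⟩
  simpa [card_image_of_injective _ hxinj] using hS.card_le_mDist

theorem exists_eq_of_tendsto_of_frequently_dist_le {α β ι : Type*} [MetricSpace α] [Finite ι]
    {l : Filter β} {s : β → α} {ρ : β → ι → α} {δ : β → ℝ} {s₀ : α} {L : ι → α}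
    (hs : Tendsto s l (𝓝 s₀)) (hρ : Tendsto ρ l (𝓝 L)) (hδ : Tendsto δ l (𝓝 0))
    (hnear : ∃ᶠ n in l, ∃ j, dist (s n) (ρ n j) ≤ δ n) : ∃ j, s₀ = L j := by
  obtain ⟨j, hj⟩ := frequently_exists.1 hnear
  exact ⟨j, dist_le_zero.1
    (le_of_tendsto_of_tendsto_of_frequently (hs.dist (tendsto_pi_nhds.1 hρ j)) hδ hj)⟩

section NearScales

variable {ι : Type*} [Fintype ι] {d k : ℕ} {x : ℕ → ι → Pt d} {ρ : ℕ → Fin k → ℝ}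
  {δ : ℕ → ℝ} {i j : Fin k}

theorem card_le_mDist_of_near_scales_of_bounded {R₁ R₂ : ℝ} (hij : i ≠ j)
    (hx : ∀ n a, ‖x n a‖ ≤ R₁) (hρ : ∀ n l, ρ n l ∈ Set.Icc 1 R₂)
    (hδ : Tendsto δ atTop (𝓝 0))
    (hnear : ∀ n a b, a ≠ b → ∃ l, dist (dist (x n a) (x n b)) (ρ n l) ≤ δ n)
    (hmerge : Tendsto (fun n => ρ n i / ρ n j) atTop (𝓝 1)) :
    Fintype.card ι ≤ mDist (k - 1) d := by
  have hcompact := (isCompact_univ_pi fun (_ : ι) => isCompact_closedBall (0 : Pt d) R₁).prod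
    (isCompact_univ_pi fun (_ : Fin k) => isCompact_Icc (a := (1 : ℝ)) (b := R₂))
  obtain ⟨⟨x₀, L⟩, hmem, ψ, hψ, hlim⟩ := hcompact.tendsto_subseq (x := fun n => (x n, ρ n))
    fun n => ⟨fun a _ => mem_closedBall_zero_iff.2 (hx n a), fun l _ => hρ n l⟩
  have hxlim : Tendsto (x ∘ ψ) atTop (𝓝 x₀) := (continuous_fst.tendsto _).comp hlim
  have hρlim : Tendsto (ρ ∘ ψ) atTop (𝓝 L) := (continuous_snd.tendsto _).comp hlim
  have hL : ∀ l, 0 < L l := fun l => zero_lt_one.trans_le (hmem.2 l trivial).1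
  have hLij : L i = L j := (div_eq_one_iff_eq (hL j).ne').1 <| tendsto_nhds_unique
    ((tendsto_pi_nhds.1 hρlim i).div (tendsto_pi_nhds.1 hρlim j) (hL j).ne')
    (hmerge.comp hψ.tendsto_atTop)
  refine card_le_mDist_of_dist_mem_range x₀ L hL (fun hinj => hij (hinj hLij))
    fun a b hab => ?_
  obtain ⟨l, hl⟩ := exists_eq_of_tendsto_of_frequently_dist_le
    ((tendsto_pi_nhds.1 hxlim a).dist (tendsto_pi_nhds.1 hxlim b)) hρlim
    (hδ.comp hψ.tendsto_atTop) (Frequently.of_forall fun n => hnear (ψ n) a b hab)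
  exact ⟨l, hl.symm⟩

theorem card_le_mDist_of_near_scales {R : ℝ} (hij : i ≠ j) (hρ : ∀ n l, ρ n l ∈ Set.Icc 1 R)
    (hδ : Tendsto δ atTop (𝓝 0))
    (hnear : ∀ n a b, a ≠ b → ∃ l, dist (dist (x n a) (x n b)) (ρ n l) ≤ δ n)
    (hmerge : Tendsto (fun n => ρ n i / ρ n j) atTop (𝓝 1)) :
    Fintype.card ι ≤ mDist (k - 1) d := by
  rcases isEmpty_or_nonempty ι with hι | ⟨⟨a₀⟩⟩
  · simp
  obtain ⟨B, hB⟩ := hδ.bddAbove_range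
  refine card_le_mDist_of_near_scales_of_bounded (x := fun n a => x n a - x n a₀)
    (R₁ := max 0 (R + B)) hij (fun n a => ?_) hρ hδ
    (fun n a b hab => by simpa only [dist_sub_right] using hnear n a b hab) hmerge
  rw [← dist_eq_norm]
  rcases eq_or_ne a a₀ with rfl | ha
  · simp
  obtain ⟨l, hl⟩ := hnear n a a₀ ha
  have hδB : δ n ≤ B := hB ⟨n, rfl⟩
  have hρR := (hρ n l).2
  rw [Real.dist_eq, abs_le] at hl
  exact le_max_of_le_right (by linarith)

end NearScales

lemma div_mem_Icc_of_ratio_le {u : ℕ → ℝ} {K : ℝ} {k : ℕ} (h0 : 0 < u 0) (hK : 1 ≤ K)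
    (hmono : ∀ j, j + 1 < k → u j ≤ u (j + 1)) (hratio : ∀ j, j + 1 < k → u (j + 1) ≤ K * u j)
    {j : ℕ} (hj : j < k) : u j / u 0 ∈ Set.Icc 1 (K ^ (k - 1)) := by
  have hbounds : ∀ l < k, u 0 ≤ u l ∧ u l ≤ K ^ l * u 0 := by
    intro l hl
    induction l with
    | zero => simp
    | succ l ih =>
      obtain ⟨h1, h2⟩ := ih (by omega)
      refine ⟨h1.trans (hmono l hl), (hratio l hl).trans ?_⟩
      rw [pow_succ', mul_assoc]
      exact mul_le_mul_of_nonneg_left h2 (by linarith)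
  obtain ⟨hlo, hhi⟩ := hbounds j hj
  rw [Set.mem_Icc, one_le_div h0, div_le_iff₀ h0]
  exact ⟨hlo, hhi.trans (mul_le_mul_of_nonneg_right
    (pow_le_pow_right₀ hK (by omega)) h0.le)⟩

lemma dist_dist_inv_smul_le {E : Type*} [NormedAddCommGroup E] [NormedSpace ℝ E] {p q : E}
    {u ε c : ℝ} (hc : 1 ≤ c) (h : dist p q ∈ Set.Icc u (u + ε)) :
    dist (dist (c⁻¹ • p) (c⁻¹ • q)) (u / c) ≤ ε := by
  have hc0 : 0 < c := zero_lt_one.trans_le hc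
  rw [dist_smul₀, Real.norm_eq_abs, abs_inv, abs_of_pos hc0, Real.dist_eq, div_eq_inv_mul,
    ← mul_sub, abs_mul, abs_inv, abs_of_pos hc0, inv_mul_le_iff₀ hc0,
    abs_of_nonneg (by linarith [h.1])]
  nlinarith [h.1, h.2]

theorem stmt8_general (d' k : ℕ)
    (S : ℕ → Finset (Pt d')) (ε : ℕ → ℝ) (t : ℕ → ℕ → ℝ) (K : ℝ)
    (hεlim : Tendsto ε atTop (nhds 0))
    (ht1 : ∀ i, 1 ≤ t i 0)
    (htmono : ∀ i j, j + 1 < k → t i j < t i (j + 1))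
    (hratio : ∀ i j, j + 1 < k → t i (j + 1) ≤ K * t i j)
    (r : ℕ) (hr : r + 1 < k)
    (hconv : Tendsto (fun i => t i (r + 1) / t i r) atTop (nhds 1))
    (hSdist : ∀ i, ∀ p ∈ S i, ∀ q ∈ S i, p ≠ q →
      ∃ j < k, dist p q ∈ Set.Icc (t i j) (t i j + ε i)) :
    ∀ᶠ i in atTop, (S i).card ≤ mDist (k - 1) d' := by
  by_contra hcon
  set m := mDist (k - 1) d'
  obtain ⟨φ, hφ, hφS⟩ := extraction_of_frequently_atTop (not_eventually.1 hcon)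
  have hemb (n : ℕ) : Nonempty (Fin (m + 1) ↪ S (φ n)) :=
    Function.Embedding.nonempty_of_card_le (by simpa using not_le.1 (hφS n))
  let e n := Classical.choice (hemb n)
  have hK : 1 ≤ K := by nlinarith [htmono 0 0 (by omega), hratio 0 0 (by omega), ht1 0]
  have ht0 (n : ℕ) : t (φ n) 0 ≠ 0 := (zero_lt_one.trans_le (ht1 (φ n))).ne'
  have hcard := card_le_mDist_of_near_scales (x := fun n a => (t (φ n) 0)⁻¹ • (e n a : Pt d'))
    (ρ := fun n l => t (φ n) l / t (φ n) 0) (δ := ε ∘ φ) (R := K ^ (k - 1))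
    (i := ⟨r + 1, hr⟩) (j := ⟨r, by omega⟩) (by simp [Fin.ext_iff])
    (fun n l => div_mem_Icc_of_ratio_le (zero_lt_one.trans_le (ht1 _)) hK
      (fun j hj => (htmono _ j hj).le) (hratio _) l.2)
    (hεlim.comp hφ.tendsto_atTop) (fun n a b hab => ?_)
    (by simpa only [Function.comp_def, div_div_div_cancel_right₀ (ht0 _)]
      using hconv.comp hφ.tendsto_atTop)
  · rw [Fintype.card_fin] at hcard
    omega
  obtain ⟨l, hl, hmem⟩ := hSdist (φ n) _ (e n a).2 _ (e n b).2
    fun h => hab ((e n).injective (Subtype.ext h))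
  exact ⟨⟨l, hl⟩, dist_dist_inv_smul_le (ht1 _) hmem⟩

theorem stmt8 (d' k : ℕ) (hk : 2 ≤ k)
    (S : ℕ → Finset (Pt d')) (ε : ℕ → ℝ) (t : ℕ → ℕ → ℝ) (K : ℝ)
    (hε : ∀ i, 0 < ε i) (hεlim : Tendsto ε atTop (nhds 0))
    (ht1 : ∀ i, 1 ≤ t i 0)
    (htmono : ∀ i j, j + 1 < k → t i j < t i (j + 1))
    (hratio : ∀ i j, j + 1 < k → t i (j + 1) ≤ K * t i j)
    (r : ℕ) (hr : r + 1 < k)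
    (hconv : Tendsto (fun i => t i (r + 1) / t i r) atTop (nhds 1))
    (hSsep : ∀ i, Separated (S i))
    (hSdist : ∀ i, ∀ p ∈ S i, ∀ q ∈ S i, p ≠ q →
      ∃ j < k, dist p q ∈ Set.Icc (t i j) (t i j + ε i)) :
    ∀ᶠ i in atTop, (S i).card ≤ mDist (k - 1) d' :=
  stmt8_general d' k S ε t K hεlim ht1 htmono hratio r hr hconv hSdist

end
end

section
/- Let S ⊂ ℝ^d be a finite set such that ‖p_1 − p_2‖ / ‖q_1 − q_2‖ ≤ K for all p_1, p_2 ∈ S and all distinct q_1, q_2 ∈ S. If S is (p, j, α)-flat for some p ∈ S, then S is (q, j, 20(Kα)^{1/2})-flat for every q ∈ S. -/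
open scoped BigOperators RealInnerProductSpace
open Filter

noncomputable section

/-! The plane `Λ` witnessing flatness at `p` also witnesses flatness at every `q`. Since
`sin θ ≤ θ`, flatness at `p` puts each `p - s` within `α ‖p - s‖` of `Λ`. Writing
`q - r = (p - r) - (p - q)` and using `‖p - r‖, ‖p - q‖ ≤ K ‖q - r‖`, the vector `q - r` lies
within `2 K α ‖q - r‖` of `Λ`, so by Jordan's inequality its angle to its projection onto `Λ` is
at most `π K α ≤ 20 √(K α)` when `K α < 1/4`. When `K α ≥ 1/4`, the bound `20 √(K α) ≥ 10 > π`
is trivial. -/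

open InnerProductGeometry Real

section Projection

variable {E : Type*} [NormedAddCommGroup E] [InnerProductSpace ℝ E]
  (Λ : Submodule ℝ E) [Λ.HasOrthogonalProjection]

theorem norm_sub_starProjection_le_norm_sub (v : E) {x : E} (hx : x ∈ Λ) :
    ‖v - Λ.starProjection v‖ ≤ ‖v - x‖ := by
  rw [Submodule.starProjection_minimal]
  exact ciInf_le (f := fun y : Λ => ‖v - y‖) ⟨0, Set.forall_mem_range.2 fun _ => norm_nonneg _⟩
    ⟨x, hx⟩

theorem norm_sub_starProjection_le_sin_angle_mul_norm (v : E) {w : E} (hw : w ∈ Λ) :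
    ‖v - Λ.starProjection v‖ ≤ sin (angle v w) * ‖v‖ := by
  obtain rfl | hw0 := eq_or_ne w 0
  · simpa [angle_zero_right] using norm_sub_starProjection_le_norm_sub Λ v Λ.zero_mem
  have hw' : ‖w‖ ≠ 0 := norm_ne_zero_iff.2 hw0
  -- compare with the point of the line `ℝ w` closest to `v`
  set c := cos (angle v w) * ‖v‖ / ‖w‖ with hc
  have hsq : ‖v - c • w‖ ^ 2 = (sin (angle v w) * ‖v‖) ^ 2 := by
    rw [norm_sub_sq_real, real_inner_smul_right, norm_smul, Real.norm_eq_abs, mul_pow, sq_abs,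
      ← cos_angle_mul_norm_mul_norm, mul_pow, sin_sq, hc]
    field_simp
    ring
  have hsin : 0 ≤ sin (angle v w) * ‖v‖ :=
    mul_nonneg (sin_nonneg_of_nonneg_of_le_pi (angle_nonneg v w) (angle_le_pi v w)) (norm_nonneg v)
  calc ‖v - Λ.starProjection v‖ ≤ ‖v - c • w‖ :=
        norm_sub_starProjection_le_norm_sub Λ v (Λ.smul_mem c hw)
    _ = sin (angle v w) * ‖v‖ := (pow_left_inj₀ (norm_nonneg _) hsin two_ne_zero).1 hsq

theorem angle_starProjection_mul_norm_le (v : E) :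
    angle v (Λ.starProjection v) * ‖v‖ ≤ π / 2 * ‖v - Λ.starProjection v‖ := by
  obtain rfl | hv0 := eq_or_ne v 0
  · rw [norm_zero, mul_zero]; positivity
  set u := Λ.starProjection v
  set e := v - u
  have hv : v = u + e := (add_sub_cancel u v).symm
  have hue : ⟪u, e⟫ = 0 :=
    inner_eq_zero_symm.1 (Submodule.starProjection_inner_eq_zero v u (Λ.starProjection_apply_mem v))
  have hθ : angle v u = angle u (u + e) := by rw [angle_comm, ← hv]
  have hsin : sin (angle v u) = ‖e‖ / ‖v‖ := by
    rw [hθ, sin_angle_add_of_inner_eq_zero hue ?_, ← hv]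
    by_contra! h
    exact hv0 (by rw [hv, h.1, h.2, add_zero])
  have hjordan := mul_le_sin (angle_nonneg v u) (hθ ▸ angle_add_le_pi_div_two_of_inner_eq_zero hue)
  rw [hsin, le_div_iff₀ (norm_pos_iff.2 hv0)] at hjordan
  calc angle v u * ‖v‖ = π / 2 * (2 / π * angle v u * ‖v‖) := by field_simp
    _ ≤ π / 2 * ‖e‖ := by gcongr

end Projection

section Flat

variable {d : ℕ} {Λ : Submodule ℝ (Pt d)} {v : Pt d}

theorem vsAngle_bot (v : Pt d) : vsAngle v ⊥ = 0 := by
  simp [vsAngle, Submodule.mem_bot]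

theorem vsAngle_le_angle {w : Pt d} (hw : w ∈ Λ) (hw0 : w ≠ 0) : vsAngle v Λ ≤ angle v w :=
  csInf_le ⟨0, by rintro _ ⟨w, -, -, rfl⟩; exact angle_nonneg v w⟩ ⟨w, hw, hw0, rfl⟩

theorem vsAngle_le_pi (hΛ : Λ ≠ ⊥) : vsAngle v Λ ≤ π := by
  obtain ⟨w, hw, hw0⟩ := Submodule.exists_mem_ne_zero_of_ne_bot hΛ
  exact (vsAngle_le_angle hw hw0).trans (angle_le_pi v w)

theorem norm_sub_starProjection_le_vsAngle_mul_norm (hΛ : Λ ≠ ⊥) :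
    ‖v - Λ.starProjection v‖ ≤ vsAngle v Λ * ‖v‖ := by
  obtain rfl | hv := eq_or_ne v 0
  · simp
  rw [← div_le_iff₀ (norm_pos_iff.2 hv)]
  obtain ⟨w₀, hw₀, hw₀0⟩ := Submodule.exists_mem_ne_zero_of_ne_bot hΛ
  refine le_csInf ⟨_, w₀, hw₀, hw₀0, rfl⟩ ?_
  rintro _ ⟨w, hw, -, rfl⟩
  rw [div_le_iff₀ (norm_pos_iff.2 hv)]
  calc ‖v - Λ.starProjection v‖ ≤ sin (angle v w) * ‖v‖ :=
        norm_sub_starProjection_le_sin_angle_mul_norm Λ v hw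
    _ ≤ angle v w * ‖v‖ := by gcongr; exact sin_le (angle_nonneg v w)

theorem vsAngle_le_of_norm_sub_starProjection_le {s : ℝ} (hv : v ≠ 0)
    (hs : ‖v - Λ.starProjection v‖ ≤ s * ‖v‖) (hs1 : s < 1) : vsAngle v Λ ≤ π / 2 * s := by
  have hv' : 0 < ‖v‖ := norm_pos_iff.2 hv
  have hPv : Λ.starProjection v ≠ 0 := by
    intro h
    rw [h, sub_zero] at hs
    nlinarith
  rw [← mul_le_mul_iff_left₀ hv', mul_assoc]
  calc vsAngle v Λ * ‖v‖ ≤ angle v (Λ.starProjection v) * ‖v‖ := by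
        gcongr; exact vsAngle_le_angle (Λ.starProjection_apply_mem v) hPv
    _ ≤ π / 2 * ‖v - Λ.starProjection v‖ := angle_starProjection_mul_norm_le Λ v
    _ ≤ π / 2 * (s * ‖v‖) := by gcongr

theorem norm_sub_starProjection_le_of_flat {S : Finset (Pt d)} {p s : Pt d} {α : ℝ}
    (hΛ : Λ ≠ ⊥) (hflat : ∀ q ∈ S, q ≠ p → vsAngle (p - q) Λ ≤ α) (hs : s ∈ S) :
    ‖(p - s) - Λ.starProjection (p - s)‖ ≤ α * ‖p - s‖ := by
  obtain rfl | hsp := eq_or_ne s p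
  · simp
  calc _ ≤ vsAngle (p - s) Λ * ‖p - s‖ := norm_sub_starProjection_le_vsAngle_mul_norm hΛ
    _ ≤ α * ‖p - s‖ := by gcongr; exact hflat s hs hsp

end Flat

theorem stmt13 (d : ℕ) (S : Finset (Pt d)) (K α : ℝ) (hK : 0 < K) (hα : 0 ≤ α)
    (hratio : ∀ p₁ ∈ S, ∀ p₂ ∈ S, ∀ q₁ ∈ S, ∀ q₂ ∈ S,
      q₁ ≠ q₂ → dist p₁ p₂ ≤ K * dist q₁ q₂)
    (j : ℕ) (p : Pt d) (hp : p ∈ S) (hflat : IsFlatAt S p j α) :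
    ∀ q ∈ S, IsFlatAt S q j (20 * Real.sqrt (K * α)) := by
  intro q hq
  obtain ⟨Λ, hrank, hΛ⟩ := hflat
  refine ⟨Λ, hrank, fun r hr hrq => ?_⟩
  obtain rfl | hΛ0 := eq_or_ne Λ ⊥
  · rw [vsAngle_bot]; positivity
  have hKα : 0 ≤ K * α := mul_nonneg hK.le hα
  have hsqrt := sq_sqrt hKα
  by_cases hbig : 1 / 4 ≤ K * α
  · calc vsAngle (q - r) Λ ≤ π := vsAngle_le_pi hΛ0
      _ ≤ 20 * √(K * α) := by nlinarith [pi_lt_four, sqrt_nonneg (K * α)]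
  have hdist : ∀ s ∈ S, ‖p - s‖ ≤ K * ‖q - r‖ := fun s hs => by
    simpa only [dist_eq_norm] using hratio p hp s hs q hq r hr hrq.symm
  have hdev : ‖(q - r) - Λ.starProjection (q - r)‖ ≤ 2 * K * α * ‖q - r‖ := by
    have hsplit : (q - r) - Λ.starProjection (q - r) =
        ((p - r) - Λ.starProjection (p - r)) - ((p - q) - Λ.starProjection (p - q)) := by
      simp only [map_sub]; abel
    rw [hsplit]
    calc _ ≤ α * ‖p - r‖ + α * ‖p - q‖ := norm_sub_le_of_le
          (norm_sub_starProjection_le_of_flat hΛ0 hΛ hr)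
          (norm_sub_starProjection_le_of_flat hΛ0 hΛ hq)
      _ ≤ 2 * K * α * ‖q - r‖ := by nlinarith [hdist r hr, hdist q hq]
  calc vsAngle (q - r) Λ ≤ π / 2 * (2 * K * α) :=
        vsAngle_le_of_norm_sub_starProjection_le (sub_ne_zero.2 hrq.symm) hdev (by linarith)
    _ ≤ 20 * √(K * α) := by
      have hle : √(K * α) ≤ 1 := by nlinarith [sqrt_nonneg (K * α)]
      nlinarith [pi_lt_four, pi_pos, mul_le_mul_of_nonneg_left hle (sqrt_nonneg (K * α))]

end
end
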